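/- Global modes are Nash equilibria: any state S* that maximizes the stationary probability π(S) ∝ exp(Φ(S)/β) over 𝒮_n (equivalently, maximizes the potential Φ over 𝒮_n) is n-player Nash stable, i.e. a Nash equilibrium of the one-shot n-player game in which each player i simultaneously chooses (a_i, {g_{ij}}_{j≠i}). -/

import Mathlib

open Finset

noncomputable section

/-- A network state: the diagonal entry `S i i` is player `i`'s action status `a_i`,
and the off-diagonal entry `S i j` (for `i ≠ j`) is the link status `g_{ij}`. -/
abbrev NetState (n : ℕ) := Fin n → Fin n → Bool

/-- Numerical (0/1) value of a Boolean coordinate. -/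
def bv (x : Bool) : ℝ := if x then 1 else 0

/-- Player `i`'s payoff
`u_i(S) = a_i v_i + h a_i Σ_{j≠i} a_j + φ a_i Σ_{j≠i} g_{ij} g_{ji} a_j
  + Σ_{j≠i} g_{ij} w_{ij} + m Σ_{j≠i} g_{ij} g_{ji}
  + q Σ_{j,l pairwise distinct from each other and from i} g_{ij} g_{jl} g_{li}`. -/
def payoff (n : ℕ) (v : Fin n → ℝ) (w : Fin n → Fin n → ℝ) (h φ m q : ℝ)
    (S : NetState n) (i : Fin n) : ℝ :=
  bv (S i i) * v i
    + h * bv (S i i) * ∑ j ∈ univ.filter (fun j => j ≠ i), bv (S j j)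
    + φ * bv (S i i) * ∑ j ∈ univ.filter (fun j => j ≠ i), bv (S i j) * bv (S j i) * bv (S j j)
    + ∑ j ∈ univ.filter (fun j => j ≠ i), bv (S i j) * w i j
    + m * ∑ j ∈ univ.filter (fun j => j ≠ i), bv (S i j) * bv (S j i)
    + q * ∑ j ∈ univ.filter (fun j => j ≠ i),
        ∑ l ∈ univ.filter (fun l => l ≠ i ∧ l ≠ j),
          bv (S i j) * bv (S j l) * bv (S l i)

/-- The potential
`Φ(S) = Σ_i a_i v_i + (h/2) Σ_{i≠j} a_i a_j + (φ/2) Σ_{i≠j} a_i a_j g_{ij} g_{ji}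
  + Σ_{i≠j} g_{ij} w_{ij} + (m/2) Σ_{i≠j} g_{ij} g_{ji}
  + (q/3) Σ_{i,j,l pairwise distinct} g_{ij} g_{jl} g_{li}`. -/
def potential (n : ℕ) (v : Fin n → ℝ) (w : Fin n → Fin n → ℝ) (h φ m q : ℝ)
    (S : NetState n) : ℝ :=
  (∑ i, bv (S i i) * v i)
    + (h / 2) * ∑ i, ∑ j ∈ univ.filter (fun j => j ≠ i), bv (S i i) * bv (S j j)
    + (φ / 2) * ∑ i, ∑ j ∈ univ.filter (fun j => j ≠ i),
        bv (S i i) * bv (S j j) * bv (S i j) * bv (S j i)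
    + (∑ i, ∑ j ∈ univ.filter (fun j => j ≠ i), bv (S i j) * w i j)
    + (m / 2) * ∑ i, ∑ j ∈ univ.filter (fun j => j ≠ i), bv (S i j) * bv (S j i)
    + (q / 3) * ∑ i, ∑ j ∈ univ.filter (fun j => j ≠ i),
        ∑ l ∈ univ.filter (fun l => l ≠ i ∧ l ≠ j), bv (S i j) * bv (S j l) * bv (S l i)

/-- `S'` differs from `S` only in the coordinates `(a_i, {g_{ij} : j ∈ B, j ≠ i})`
controlled by player `i` within the set `B` (recall `a_i` is the coordinate `(i,i)`). -/
def deviatesOnly (n : ℕ) (i : Fin n) (B : Finset (Fin n)) (S S' : NetState n) : Prop :=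
  ∀ x y : Fin n, ¬(x = i ∧ y ∈ B) → S' x y = S x y

/-- `S` is `k`-player Nash stable: for every subset `Ik` of `k` players and every `i ∈ Ik`,
no deviation of `i` in the coordinates `(a_i, {g_{ij} : j ∈ Ik, j ≠ i})` improves `i`'s payoff. -/
def kPS (n : ℕ) (v : Fin n → ℝ) (w : Fin n → Fin n → ℝ) (h φ m q : ℝ) (k : ℕ)
    (S : NetState n) : Prop :=
  ∀ Ik : Finset (Fin n), Ik.card = k → ∀ i ∈ Ik,
    ∀ S' : NetState n, deviatesOnly n i Ik S S' →
      payoff n v w h φ m q S' i ≤ payoff n v w h φ m q S i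

/-- The stationary distribution `π(S) = exp(Φ(S)/β) / Σ_T exp(Φ(T)/β)`. -/
noncomputable def statDist (n : ℕ) (v : Fin n → ℝ) (w : Fin n → Fin n → ℝ) (h φ m q β : ℝ)
    (S : NetState n) : ℝ :=
  Real.exp (potential n v w h φ m q S / β)
    / ∑ T : NetState n, Real.exp (potential n v w h φ m q T / β)

/-! A deviation of player `i` only changes the terms of `Φ` that involve `i`. Each pair term
appears twice in `Φ` with weight `1/2`, and each triangle three times (once per rotation) with
weight `1/3`, so the change in `Φ` is exactly the change in `u_i`: `Φ` is an exact potential.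
As `β > 0`, a maximizer of `π` maximizes `Φ`, hence no unilateral deviation can raise a payoff. -/

theorem sum_sum_sum_rotate {α M : Type*} [Fintype α] [AddCommMonoid M] (F : α → α → α → M) :
    ∑ x, ∑ y, ∑ l, F x y l = ∑ x, ∑ y, ∑ l, F l x y := by
  rw [Finset.sum_comm]
  exact sum_congr rfl fun _ _ => Finset.sum_comm

section
variable {α M : Type*} [Fintype α] [DecidableEq α] [AddCommGroup M]

theorem sum_offDiag_sub_sum_offDiag (i : α) (f g : α → α → M)
    (hfg : ∀ x y, x ≠ i → y ≠ i → f x y = g x y) :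
    ∑ x, ∑ y ∈ univ.filter (· ≠ x), f x y - ∑ x, ∑ y ∈ univ.filter (· ≠ x), g x y
      = ∑ y ∈ univ.filter (· ≠ i), (f i y + f y i - (g i y + g y i)) := by
  have hrow : ∀ x ∈ univ.erase i,
      ∑ y ∈ univ.filter (· ≠ x), (f x y - g x y) = f x i - g x i := by
    intro x hx
    refine sum_eq_single_of_mem i (by simpa [eq_comm] using hx) fun y _ hy => ?_
    rw [hfg x y (ne_of_mem_erase hx) hy, sub_self]
  simp_rw [← sum_sub_distrib]
  rw [← add_sum_erase univ _ (mem_univ i), sum_congr rfl hrow, ← filter_ne',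
    ← sum_add_distrib]
  exact sum_congr rfl fun y _ => by abel

/-- Split the sum by the position of `i`; cyclic symmetry makes the three positions contribute
equally. -/
theorem sum_sum_sum_eq_three_nsmul_of_cyclic (i : α) (F : α → α → α → M)
    (hF : ∀ x y l, F x y l = F y l x) (hoff : ∀ x y l, x ≠ i → y ≠ i → l ≠ i → F x y l = 0)
    (hdiag : ∀ l, F i i l = 0) :
    ∑ x, ∑ y, ∑ l, F x y l = 3 • ∑ y, ∑ l, F i y l := by
  have hdiag₂ : ∀ y, F y i i = 0 := fun y => by rw [hF, hdiag]
  have hdiag₃ : ∀ x, F i x i = 0 := fun x => by rw [hF, hdiag₂]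
  have hsplit : ∀ x y l, F x y l
      = (if x = i then F x y l else 0) + (if y = i then F x y l else 0)
        + (if l = i then F x y l else 0) := by
    intro x y l
    by_cases hx : x = i <;> by_cases hy : y = i <;> by_cases hl : l = i <;>
      simp only [hx, hy, hl, hdiag, hdiag₂, hdiag₃, hoff x y l, if_true, if_false,
        add_zero, zero_add, ne_eq, not_false_eq_true]
  have hrot : ∀ (Q : α → α → α → Prop) [∀ x y l, Decidable (Q x y l)],
      ∑ x, ∑ y, ∑ l, (if Q x y l then F x y l else 0)
        = ∑ x, ∑ y, ∑ l, (if Q l x y then F x y l else 0) := fun Q _ => by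
    rw [sum_sum_sum_rotate]
    exact sum_congr rfl fun x _ => sum_congr rfl fun y _ => sum_congr rfl fun l _ => by
      rw [hF l x y]
  rw [sum_congr rfl fun x _ => sum_congr rfl fun y _ => sum_congr rfl fun l _ =>
    hsplit x y l]
  simp only [sum_add_distrib]
  rw [hrot (fun _ _ l => l = i), hrot (fun _ y _ => y = i)]
  simp only [← ite_sum_zero, sum_ite_eq', mem_univ, if_true]
  abel

theorem sum_distinct_triples_sub (i : α) (f g : α → α → α → M)
    (hf : ∀ x y l, f x y l = f y l x) (hg : ∀ x y l, g x y l = g y l x)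
    (hfg : ∀ x y l, x ≠ i → y ≠ i → l ≠ i → f x y l = g x y l) :
    ∑ x, ∑ y ∈ univ.filter (· ≠ x), ∑ l ∈ univ.filter (fun l => l ≠ x ∧ l ≠ y), f x y l
      - ∑ x, ∑ y ∈ univ.filter (· ≠ x), ∑ l ∈ univ.filter (fun l => l ≠ x ∧ l ≠ y), g x y l
      = 3 • ∑ y ∈ univ.filter (· ≠ i), ∑ l ∈ univ.filter (fun l => l ≠ i ∧ l ≠ y),
          (f i y l - g i y l) := by
  set F : α → α → α → M := fun x y l =>
    if y ≠ x ∧ l ≠ x ∧ l ≠ y then f x y l - g x y l else 0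
  have hfilter : ∀ x, ∑ y ∈ univ.filter (· ≠ x), ∑ l ∈ univ.filter (fun l => l ≠ x ∧ l ≠ y),
      (f x y l - g x y l) = ∑ y, ∑ l, F x y l := fun x => by
    simp only [F, sum_filter, ite_and, ite_sum_zero]
  simp only [← sum_sub_distrib, hfilter]
  refine sum_sum_sum_eq_three_nsmul_of_cyclic i F (fun x y l => ?_) (fun x y l hx hy hl => ?_)
    (fun l => by simp [F])
  · simp only [F, hf x, hg x]
    congr 1
    grind
  · simp [F, hfg x y l hx hy hl]

end

section
variable {n : ℕ} (v : Fin n → ℝ) (w : Fin n → Fin n → ℝ) (h φ m q : ℝ)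

def pairPotential (S : NetState n) (x y : Fin n) : ℝ :=
  h / 2 * (bv (S x x) * bv (S y y)) + φ / 2 * (bv (S x x) * bv (S y y) * bv (S x y) * bv (S y x))
    + bv (S x y) * w x y + m / 2 * (bv (S x y) * bv (S y x))

def linkPayoff (S : NetState n) (i j : Fin n) : ℝ :=
  h * bv (S i i) * bv (S j j) + φ * bv (S i i) * (bv (S i j) * bv (S j i) * bv (S j j))
    + bv (S i j) * w i j + m * (bv (S i j) * bv (S j i))

def triangle (S : NetState n) (x y l : Fin n) : ℝ := bv (S x y) * bv (S y l) * bv (S l x)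

theorem potential_eq (S : NetState n) :
    potential n v w h φ m q S = ∑ x, bv (S x x) * v x
      + ∑ x, ∑ y ∈ univ.filter (· ≠ x), pairPotential w h φ m S x y
      + q / 3 * ∑ x, ∑ y ∈ univ.filter (· ≠ x), ∑ l ∈ univ.filter (fun l => l ≠ x ∧ l ≠ y),
          triangle S x y l := by
  simp only [potential, pairPotential, triangle, mul_sum, sum_add_distrib]
  ring

theorem payoff_eq (S : NetState n) (i : Fin n) :
    payoff n v w h φ m q S i = bv (S i i) * v i
      + ∑ j ∈ univ.filter (· ≠ i), linkPayoff w h φ m S i j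
      + q * ∑ j ∈ univ.filter (· ≠ i), ∑ l ∈ univ.filter (fun l => l ≠ i ∧ l ≠ j),
          triangle S i j l := by
  simp only [payoff, linkPayoff, triangle, mul_sum, sum_add_distrib]
  ring

theorem pairPotential_add_pairPotential (S : NetState n) (x y : Fin n) :
    pairPotential w h φ m S x y + pairPotential w h φ m S y x
      = linkPayoff w h φ m S x y + bv (S y x) * w y x := by
  simp only [pairPotential, linkPayoff]
  ring

theorem potential_sub_potential (i : Fin n) {S S' : NetState n}
    (hS : ∀ x y, x ≠ i → S' x y = S x y) :
    potential n v w h φ m q S' - potential n v w h φ m q S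
      = payoff n v w h φ m q S' i - payoff n v w h φ m q S i := by
  have singles : ∑ x, bv (S' x x) * v x - ∑ x, bv (S x x) * v x
      = bv (S' i i) * v i - bv (S i i) * v i := by
    rw [← sum_sub_distrib]
    exact sum_eq_single_of_mem i (mem_univ i) fun x _ hx => by rw [hS x x hx, sub_self]
  have pairs := sum_offDiag_sub_sum_offDiag i
    (pairPotential w h φ m S') (pairPotential w h φ m S) fun x y hx hy => by
      simp only [pairPotential, hS x _ hx, hS y _ hy]
  have links : ∑ y ∈ univ.filter (· ≠ i),
        (pairPotential w h φ m S' i y + pairPotential w h φ m S' y i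
          - (pairPotential w h φ m S i y + pairPotential w h φ m S y i))
      = ∑ j ∈ univ.filter (· ≠ i), linkPayoff w h φ m S' i j
        - ∑ j ∈ univ.filter (· ≠ i), linkPayoff w h φ m S i j := by
    rw [← sum_sub_distrib]
    refine sum_congr rfl fun y hy => ?_
    rw [pairPotential_add_pairPotential, pairPotential_add_pairPotential,
      hS y i (mem_filter.mp hy).2]
    ring
  have triangles := sum_distinct_triples_sub i (triangle S') (triangle S)
    (fun _ _ _ => by simp only [triangle]; ring) (fun _ _ _ => by simp only [triangle]; ring)
    (fun x y l hx hy hl => by simp only [triangle, hS _ _ hx, hS _ _ hy, hS _ _ hl])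
  simp only [nsmul_eq_mul, Nat.cast_ofNat, sum_sub_distrib] at triangles
  rw [potential_eq, potential_eq, payoff_eq, payoff_eq]
  linear_combination singles + pairs + links + q / 3 * triangles

theorem kPS_of_forall_potential_le (k : ℕ) {Smax : NetState n}
    (hmax : ∀ S, potential n v w h φ m q S ≤ potential n v w h φ m q Smax) :
    kPS n v w h φ m q k Smax := by
  intro Ik _ i _ S' hdev
  have hΔ := potential_sub_potential v w h φ m q i fun x y hx => hdev x y fun hxy => hx hxy.1
  linarith [hmax S']

theorem statDist_le_statDist_iff {β : ℝ} (hβ : 0 < β) {S T : NetState n} :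
    statDist n v w h φ m q β S ≤ statDist n v w h φ m q β T
      ↔ potential n v w h φ m q S ≤ potential n v w h φ m q T := by
  have hZ : 0 < ∑ T : NetState n, Real.exp (potential n v w h φ m q T / β) :=
    sum_pos (fun _ _ => Real.exp_pos _) univ_nonempty
  rw [statDist, statDist, div_le_div_iff_of_pos_right hZ, Real.exp_le_exp,
    div_le_div_iff_of_pos_right hβ]

end

theorem global_mode_is_Nash_general (n : ℕ)
    (v : Fin n → ℝ) (w : Fin n → Fin n → ℝ) (h φ m q : ℝ) (β : ℝ) (hβ : 0 < β)
    (Smax : NetState n)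
    (hmax : ∀ S : NetState n, statDist n v w h φ m q β S ≤ statDist n v w h φ m q β Smax) :
    kPS n v w h φ m q n Smax :=
  kPS_of_forall_potential_le v w h φ m q n fun S =>
    (statDist_le_statDist_iff v w h φ m q hβ).mp (hmax S)

/-- **Global modes are Nash equilibria.** Any state maximizing the stationary probability
`π(S) ∝ exp(Φ(S)/β)` over the state space (equivalently, maximizing the potential `Φ`) is
`n`-player Nash stable, i.e. a Nash equilibrium of the one-shot `n`-player game in which each
player `i` simultaneously chooses `(a_i, {g_{ij}}_{j≠i})`. -/
theorem global_mode_is_Nash (n : ℕ) (hn : 2 ≤ n)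
    (v : Fin n → ℝ) (w : Fin n → Fin n → ℝ) (h φ m q : ℝ) (β : ℝ) (hβ : 0 < β)
    (Smax : NetState n)
    (hmax : ∀ S : NetState n, statDist n v w h φ m q β S ≤ statDist n v w h φ m q β Smax) :
    kPS n v w h φ m q n Smax :=
  global_mode_is_Nash_general n v w h φ m q β hβ Smax hmax
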